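/- arXiv:2006.09577 — 2 statements merged into one kernel-verified Lean document; each statement's English description precedes it below -/
import Mathlib

section
/- Let q be an odd prime power, d ≥ 1, and t ≥ 2. No affine subspace of 𝔽_q^d of dimension t − 2 contains a t-falling star of (𝔽_q*)^d under φ_d. Consequently af(S) ≥ FS(S) − 1 for any S ⊆ (𝔽_q*)^d. -/
open Finset

namespace EG

/-- The color set `C_d = DOT ⊔ ZERO ⊔ UP ⊔ DOWN`, where `DOT = 𝔽_q*` and
`ZERO`, `UP`, `DOWN` are copies of `{1,…,d} × 𝔽_q`. -/
inductive Color (d : ℕ) (F : Type) [Zero F] where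
  | dot  : {a : F // a ≠ 0} → Color d F
  | zero : Fin d → F → Color d F
  | up   : Fin d → F → Color d F
  | down : Fin d → F → Color d F

variable {F : Type} [Field F] [Fintype F] [LinearOrder F] {d : ℕ} [NeZero d]

/-- The standard dot product. -/
def dotp (x y : Fin d → F) : F := ∑ i, x i * y i

/-- Lexicographic order on vectors induced by the linear order on `F`. -/
def lexLt (x y : Fin d → F) : Prop :=
  ∃ i, (∀ j, j < i → x j = y j) ∧ x i < y i

/-- The first coordinate at which `x` and `y` differ. -/
noncomputable def firstDiff (x y : Fin d → F) : Fin d :=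
  if h : (Finset.univ.filter fun i => x i ≠ y i).Nonempty then
    (Finset.univ.filter fun i => x i ≠ y i).min' h
  else ⟨0, Nat.pos_of_ne_zero (NeZero.ne d)⟩

/-- The Modified Dot Product coloring, defined for `x` lexicographically below `y`. -/
noncomputable def phiAux (x y : Fin d → F) : Color d F :=
  if h0 : dotp x y = 0 then
    .zero (firstDiff x y) (x (firstDiff x y) + y (firstDiff x y))
  else if dotp x y = dotp x x then
    .up (firstDiff x y) (x (firstDiff x y) + y (firstDiff x y))
  else if dotp x y = dotp y y then
    .down (firstDiff x y) (x (firstDiff x y) + y (firstDiff x y))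
  else .dot ⟨dotp x y, h0⟩

open scoped Classical in
/-- The Modified Dot Product coloring `φ_d`, as a symmetric function. -/
noncomputable def phi (x y : Fin d → F) : Color d F :=
  if lexLt x y then phiAux x y else phiAux y x

/-- Membership in `(𝔽_q*)^d`: all coordinates nonzero. -/
def NZ (x : Fin d → F) : Prop := ∀ i, x i ≠ 0

/-- `T` contains a `t`-falling star under the coloring `f`. -/
def IsFallingStar (f : (Fin d → F) → (Fin d → F) → Color d F)
    (T : Set (Fin d → F)) (t : ℕ) : Prop :=
  ∃ s : Fin t → (Fin d → F), Function.Injective s ∧ (∀ i, s i ∈ T) ∧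
    ∃ α : Fin t → Color d F, ∀ i j : Fin t, j < i → f (s i) (s j) = α i

lemma dotp_comm (x y : Fin d → F) : dotp x y = dotp y x := by
  simp [dotp, mul_comm]

lemma firstDiff_ne {x y : Fin d → F} (hxy : x ≠ y) :
    x (firstDiff x y) ≠ y (firstDiff x y) := by
  have hne : (Finset.univ.filter fun i => x i ≠ y i).Nonempty := by
    obtain ⟨i, hi⟩ := Function.ne_iff.mp hxy
    exact ⟨i, by simp [hi]⟩
  rw [firstDiff, dif_pos hne]
  have := Finset.min'_mem _ hne
  simpa using this

lemma phiAux_dot {x y : Fin d → F} {c : {a : F // a ≠ 0}} (h : phiAux x y = .dot c) :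
    dotp x y = c ∧ (c : F) ≠ dotp x x ∧ (c : F) ≠ dotp y y := by
  rw [phiAux] at h
  split_ifs at h with h0 h1 h2
  cases h
  exact ⟨rfl, fun hc => h1 (show dotp x y = dotp x x from hc),
      fun hc => h2 (show dotp x y = dotp y y from hc)⟩

lemma phi_dot {x y : Fin d → F} {c : {a : F // a ≠ 0}} (h : phi x y = .dot c) :
    dotp x y = c ∧ (c : F) ≠ dotp x x ∧ (c : F) ≠ dotp y y := by
  classical
  rw [phi] at h
  split_ifs at h with hlex
  · exact phiAux_dot h
  · obtain ⟨h1, h2, h3⟩ := phiAux_dot h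
    exact ⟨(dotp_comm x y).trans h1, h3, h2⟩

lemma phiAux_coord {x y : Fin d → F} (hxy : x ≠ y) {k : Fin d} {b : F}
    (h : phiAux x y = .zero k b ∨ phiAux x y = .up k b ∨ phiAux x y = .down k b) :
    x k + y k = b ∧ x k ≠ y k := by
  rw [phiAux] at h
  have hk : k = firstDiff x y ∧ b = x (firstDiff x y) + y (firstDiff x y) := by
    split_ifs at h <;> rcases h with h | h | h <;> cases h <;> exact ⟨rfl, rfl⟩
  obtain ⟨hk, hb⟩ := hk
  subst hk; subst hb
  exact ⟨rfl, firstDiff_ne hxy⟩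

lemma phi_coord {x y : Fin d → F} (hxy : x ≠ y) {k : Fin d} {b : F}
    (h : phi x y = .zero k b ∨ phi x y = .up k b ∨ phi x y = .down k b) :
    x k + y k = b ∧ x k ≠ y k := by
  classical
  rw [phi] at h
  split_ifs at h with hlex
  · exact phiAux_coord hxy h
  · obtain ⟨h1, h2⟩ := phiAux_coord (Ne.symm hxy) h
    exact ⟨by rw [add_comm]; exact h1, fun he => h2 he.symm⟩

lemma dotp_sum_smul {ι : Type*} (T : Finset ι) (w : ι → F) (f : ι → Fin d → F)
    (v : Fin d → F) :
    dotp (∑ j ∈ T, w j • f j) v = ∑ j ∈ T, w j * dotp (f j) v := by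
  simp only [dotp, Finset.sum_apply, Pi.smul_apply, smul_eq_mul, Finset.sum_mul,
    Finset.mul_sum]
  rw [Finset.sum_comm]
  exact Finset.sum_congr rfl fun j _ => Finset.sum_congr rfl fun i _ => by ring

lemma coord_contra {t : ℕ} {s : Fin t → Fin d → F} {T : Finset (Fin t)} {w : Fin t → F}
    {m : Fin t} (hmT : m ∈ T) (hwm : w m ≠ 0)
    (hw0T : ∑ j ∈ T, w j = 0) (hwsT : ∑ j ∈ T, w j • s j = 0)
    {j0 : Fin t} (hj0T : j0 ∈ T) (hj0ne : j0 ≠ m) {k : Fin d} {b : F}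
    (hco : ∀ j ∈ T, j ≠ m → s m k + s j k = b ∧ s m k ≠ s j k) : False := by
  classical
  have h1 : ∑ j ∈ T, w j * s j k = 0 := by
    have := congrFun hwsT k
    simpa [Finset.sum_apply] using this
  have h2 : ∀ j ∈ T.erase m, w j * s j k = w j * (b - s m k) := by
    intro j hj
    rw [eq_sub_of_add_eq' (hco j (Finset.mem_of_mem_erase hj) (Finset.ne_of_mem_erase hj)).1]
  have h3 : ∑ j ∈ T.erase m, w j = -w m := by
    have h' := Finset.sum_erase_add T w hmT
    rw [hw0T] at h'
    exact eq_neg_of_add_eq_zero_left h'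
  rw [← Finset.sum_erase_add _ _ hmT, Finset.sum_congr rfl h2, ← Finset.sum_mul, h3] at h1
  have h4 : w m * (s m k - (b - s m k)) = 0 := by linear_combination h1
  rcases mul_eq_zero.mp h4 with h | h
  · exact hwm h
  · have h5 : s m k = b - s m k := sub_eq_zero.mp h
    have h6 := hco j0 hj0T hj0ne
    exact h6.2 (h5.trans (eq_sub_of_add_eq' h6.1).symm)

lemma star_affineIndependent {t : ℕ} {s : Fin t → Fin d → F} (hs : Function.Injective s)
    {α : Fin t → Color d F} (hα : ∀ i j : Fin t, j < i → phi (s i) (s j) = α i) :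
    AffineIndependent F s := by
  classical
  rw [affineIndependent_iff]
  intro fs w hw0 hws e he
  by_contra hwe
  set T := fs.filter (fun j => w j ≠ 0) with hT
  have hTne : T.Nonempty := ⟨e, Finset.mem_filter.mpr ⟨he, hwe⟩⟩
  set m := T.max' hTne with hm
  have hmT : m ∈ T := T.max'_mem hTne
  have hwm : w m ≠ 0 := (Finset.mem_filter.mp hmT).2
  have hlt : ∀ j ∈ T, j ≠ m → j < m := fun j hj hne =>
    lt_of_le_of_ne (T.le_max' j hj) hne
  have hsubT : T ⊆ fs := Finset.filter_subset _ _
  have hw0T : ∑ j ∈ T, w j = 0 := by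
    rw [← hw0]
    apply Finset.sum_subset hsubT
    intro j hj hj'
    by_contra h
    exact hj' (Finset.mem_filter.mpr ⟨hj, h⟩)
  have hwsT : ∑ j ∈ T, w j • s j = 0 := by
    rw [← hws]
    apply Finset.sum_subset hsubT
    intro j hj hj'
    have hwj : w j = 0 := by
      by_contra h
      exact hj' (Finset.mem_filter.mpr ⟨hj, h⟩)
    simp [hwj]
  have hj0 : ∃ j ∈ T, j ≠ m := by
    by_contra h
    push_neg at h
    have hsum : ∑ j ∈ T, w j = w m :=
      Finset.sum_eq_single_of_mem m hmT (fun j hj hne => absurd (h j hj) hne)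
    exact hwm (hsum.symm.trans hw0T)
  obtain ⟨j0, hj0T, hj0ne⟩ := hj0
  have hj0m : j0 < m := hlt j0 hj0T hj0ne
  cases hc : α m with
  | dot c =>
    have hd : ∀ j ∈ T, j ≠ m → dotp (s m) (s j) = c := fun j hj hne =>
      (phi_dot ((hα m j (hlt j hj hne)).trans hc)).1
    have hcne : (c : F) ≠ dotp (s m) (s m) :=
      (phi_dot ((hα m j0 hj0m).trans hc)).2.1
    have h1 : ∑ j ∈ T, w j * dotp (s j) (s m) = 0 := by
      rw [← dotp_sum_smul, hwsT]
      simp [dotp]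
    have h2 : ∀ j ∈ T.erase m, w j * dotp (s j) (s m) = w j * c := by
      intro j hj
      rw [dotp_comm, hd j (Finset.mem_of_mem_erase hj) (Finset.ne_of_mem_erase hj)]
    have h3 : ∑ j ∈ T.erase m, w j = -w m := by
      have h' := Finset.sum_erase_add T w hmT
      rw [hw0T] at h'
      exact eq_neg_of_add_eq_zero_left h'
    rw [← Finset.sum_erase_add _ _ hmT, Finset.sum_congr rfl h2, ← Finset.sum_mul, h3] at h1
    have h4 : w m * (dotp (s m) (s m) - (c : F)) = 0 := by linear_combination h1
    rcases mul_eq_zero.mp h4 with h | h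
    · exact hwm h
    · exact hcne (sub_eq_zero.mp h).symm
  | zero k b =>
    exact coord_contra hmT hwm hw0T hwsT hj0T hj0ne (fun j hj hne =>
      phi_coord (hs.ne (hlt j hj hne).ne') (Or.inl ((hα m j (hlt j hj hne)).trans hc)))
  | up k b =>
    exact coord_contra hmT hwm hw0T hwsT hj0T hj0ne (fun j hj hne =>
      phi_coord (hs.ne (hlt j hj hne).ne')
        (Or.inr (Or.inl ((hα m j (hlt j hj hne)).trans hc))))
  | down k b =>
    exact coord_contra hmT hwm hw0T hwsT hj0T hj0ne (fun j hj hne =>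
      phi_coord (hs.ne (hlt j hj hne).ne')
        (Or.inr (Or.inr ((hα m j (hlt j hj hne)).trans hc))))

/-- No affine subspace of `𝔽_q^d` of dimension `t - 2` contains a `t`-falling star of
`(𝔽_q*)^d` under `φ_d`; consequently `af(S) ≥ FS(S) - 1` for all `S ⊆ (𝔽_q*)^d`. -/
theorem no_affine_stars (hodd : Odd (Fintype.card F)) :
    (∀ t : ℕ, 2 ≤ t → ∀ W : AffineSubspace F (Fin d → F),
      Module.finrank F W.direction = t - 2 →
      ¬ IsFallingStar phi ((W : Set (Fin d → F)) ∩ {x | NZ x}) t) ∧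
    (∀ S : Set (Fin d → F), S ⊆ {x | NZ x} → ∀ t : ℕ, IsFallingStar phi S t →
      t - 1 ≤ Module.finrank F (affineSpan F S).direction) := by
  constructor
  · intro t ht W hW hstar
    obtain ⟨s, hinj, hmem, α, hα⟩ := hstar
    have hai : AffineIndependent F s := star_affineIndependent hinj hα
    have hsub : Set.range s ⊆ (W : Set (Fin d → F)) := by
      rintro _ ⟨i, rfl⟩
      exact (hmem i).1
    have hle : vectorSpan F (Set.range s) ≤ W.direction := by
      rw [← direction_affineSpan]
      exact AffineSubspace.direction_le (affineSpan_le.mpr hsub)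
    have hfr : Module.finrank F (vectorSpan F (Set.range s)) = t - 1 :=
      hai.finrank_vectorSpan (by rw [Fintype.card_fin]; omega)
    have hmono := Submodule.finrank_mono hle
    rw [hfr, hW] at hmono
    omega
  · rintro S hS t ⟨s, hinj, hmem, α, hα⟩
    rcases Nat.eq_zero_or_pos t with rfl | ht
    · simp
    have hai : AffineIndependent F s := star_affineIndependent hinj hα
    have hsub : Set.range s ⊆ S := by
      rintro _ ⟨i, rfl⟩
      exact hmem i
    have hle : vectorSpan F (Set.range s) ≤ (affineSpan F S).direction := by
      rw [← direction_affineSpan]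
      exact AffineSubspace.direction_le (affineSpan_mono F hsub)
    have hfr : Module.finrank F (vectorSpan F (Set.range s)) = t - 1 :=
      hai.finrank_vectorSpan (by rw [Fintype.card_fin]; omega)
    have hmono := Submodule.finrank_mono hle
    rw [hfr] at hmono
    exact hmono

end EG
end

section
/- Suppose S is a finite set of vertices, f an edge-coloring, and S has a leftover structure under f with initial bipartition S = A ⊔ B. If FS(X) ≥ ⌈log₂ |X|⌉ + 1 for X = A and X = B, and max(|A|,|B|) ≥ ⌈|S|/2⌉, then FS(S) ≥ ⌈log₂ |S|⌉ + 1. In particular (by induction), any set S with a leftover structure satisfies FS(S) ≥ ⌈log₂ |S|⌉ + 1; equivalently, one needs the arithmetic fact that ⌈log₂ ⌈p/2⌉⌉ + 1 = ⌈log₂ p⌉ for every integer p ≥ 2. -/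
namespace EG

/-- The set of colors appearing on edges inside `A`. -/
def colorsOn {V C : Type} (f : V → V → C) (A : Finset V) : Set C :=
  {c | ∃ a ∈ A, ∃ b ∈ A, a ≠ b ∧ f a b = c}

/-- `S` has a leftover structure under the edge-coloring `f`. -/
inductive Leftover {V C : Type} [DecidableEq V] (f : V → V → C) : Finset V → Prop
  | single (v : V) : Leftover f {v}
  | split (A B : Finset V) (α : C)
      (hA : Leftover f A) (hB : Leftover f B) (hdisj : Disjoint A B)
      (hcolors : colorsOn f A ∩ colorsOn f B = ∅)
      (hcross : ∀ a ∈ A, ∀ b ∈ B, f a b = α ∧ f b a = α)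
      (hαA : α ∉ colorsOn f A) (hαB : α ∉ colorsOn f B) :
      Leftover f (A ∪ B)

/-- `T` contains a `t`-falling star under the symmetric edge-coloring `f`. -/
def HasFS {V C : Type} (f : V → V → C) (T : Set V) (t : ℕ) : Prop :=
  ∃ s : Fin t → V, Function.Injective s ∧ (∀ i, s i ∈ T) ∧
    ∃ α : Fin t → C, ∀ i j : Fin t, j < i → f (s i) (s j) = α i


theorem hasFS_mono_set {V C : Type} (f : V → V → C) {T T' : Set V} (h : T ⊆ T') {t : ℕ}
    (hT : HasFS f T t) : HasFS f T' t := by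
  obtain ⟨s, hinj, hmem, hα⟩ := hT
  exact ⟨s, hinj, fun i => h (hmem i), hα⟩

theorem hasFS_mono {V C : Type} (f : V → V → C) (T : Set V) {t t' : ℕ} (h : t' ≤ t)
    (hT : HasFS f T t) : HasFS f T t' := by
  obtain ⟨s, hinj, hmem, α, hα⟩ := hT
  refine ⟨s ∘ Fin.castLE h, hinj.comp (Fin.castLE_injective h), fun i => hmem _, α ∘ Fin.castLE h,
    fun i j hij => hα _ _ ?_⟩
  exact hij

theorem hasFS_snoc {V C : Type} (f : V → V → C) {A : Set V} {t : ℕ} (b : V) (hb : b ∉ A) (β : C)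
    (hcross : ∀ a ∈ A, f b a = β) (h : HasFS f A t) :
    HasFS f (insert b A) (t + 1) := by
  obtain ⟨s, hinj, hmem, α, hα⟩ := h
  refine ⟨Fin.snoc s b, ?_, ?_, Fin.snoc α β, ?_⟩
  · intro i j hij
    rcases eq_or_ne i (Fin.last t) with hi | hi <;> rcases eq_or_ne j (Fin.last t) with hj | hj
    · rw [hi, hj]
    · exfalso; apply hb
      rw [hi, Fin.snoc_last] at hij
      rw [← Fin.castSucc_castPred j hj, Fin.snoc_castSucc] at hij
      rw [hij]; exact hmem _
    · exfalso; apply hb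
      rw [hj, Fin.snoc_last] at hij
      rw [← Fin.castSucc_castPred i hi, Fin.snoc_castSucc] at hij
      rw [← hij]; exact hmem _
    · rw [← Fin.castSucc_castPred i hi, ← Fin.castSucc_castPred j hj,
        Fin.snoc_castSucc, Fin.snoc_castSucc] at hij
      rw [← Fin.castSucc_castPred i hi, ← Fin.castSucc_castPred j hj, hinj hij]
  · intro i
    rcases eq_or_ne i (Fin.last t) with hi | hi
    · rw [hi, Fin.snoc_last]; exact Set.mem_insert _ _
    · rw [← Fin.castSucc_castPred i hi, Fin.snoc_castSucc]
      exact Set.mem_insert_of_mem _ (hmem _)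
  · intro i j hij
    rcases eq_or_ne i (Fin.last t) with hi | hi
    · have hj : j ≠ Fin.last t := by rintro rfl; exact absurd (hi ▸ hij) (lt_irrefl _)
      rw [hi]
      simp only [Fin.snoc_last]
      rw [← Fin.castSucc_castPred j hj, Fin.snoc_castSucc]
      exact hcross _ (hmem _)
    · have hj' : j ≠ Fin.last t := by
        rintro rfl; exact hi (le_antisymm (Fin.le_last i) hij.le)
      rw [← Fin.castSucc_castPred i hi, ← Fin.castSucc_castPred j hj']
      simp only [Fin.snoc_castSucc]
      exact hα _ _ (by simp only [Fin.lt_def, Fin.coe_castPred]; exact hij)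

theorem leftover_nonempty {V C : Type} [DecidableEq V] {f : V → V → C} {S : Finset V}
    (h : Leftover f S) : S.Nonempty := by
  induction h with
  | single v => exact ⟨v, Finset.mem_singleton_self v⟩
  | split A B α _ _ _ _ _ _ _ ihA ihB => exact ihA.mono Finset.subset_union_left

theorem clog_half {p : ℕ} (hp : 2 ≤ p) : Nat.clog 2 ((p + 1) / 2) + 1 = Nat.clog 2 p := by
  rw [Nat.clog_of_two_le (by norm_num) hp]
  rfl

/-- Induction step for `FS(S) ≥ ⌈log₂ |S|⌉ + 1` on leftover sets, together with the
arithmetic identity `⌈log₂ ⌈p/2⌉⌉ + 1 = ⌈log₂ p⌉` for `p ≥ 2`. -/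
theorem leftover_falling_star_log {V C : Type} [DecidableEq V] (f : V → V → C)
    (hsym : ∀ x y, f x y = f y x) (A B : Finset V) (α : C)
    (hA : Leftover f A) (hB : Leftover f B) (hdisj : Disjoint A B)
    (hcolors : colorsOn f A ∩ colorsOn f B = ∅)
    (hcross : ∀ a ∈ A, ∀ b ∈ B, f a b = α ∧ f b a = α)
    (hαA : α ∉ colorsOn f A) (hαB : α ∉ colorsOn f B)
    (hFA : HasFS f (↑A) (Nat.clog 2 A.card + 1))
    (hFB : HasFS f (↑B) (Nat.clog 2 B.card + 1))
    (hmax : ((A ∪ B).card + 1) / 2 ≤ max A.card B.card) :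
    HasFS f (↑(A ∪ B) : Set V) (Nat.clog 2 (A ∪ B).card + 1) ∧
    ∀ p : ℕ, 2 ≤ p → Nat.clog 2 ((p + 1) / 2) + 1 = Nat.clog 2 p := by
  have key : ∀ p : ℕ, 2 ≤ p → Nat.clog 2 ((p + 1) / 2) + 1 = Nat.clog 2 p :=
    fun p hp => clog_half hp
  refine ⟨?_, key⟩
  have hAne := leftover_nonempty hA
  have hBne := leftover_nonempty hB
  have hcard : (A ∪ B).card = A.card + B.card := Finset.card_union_of_disjoint hdisj
  have hn2 : 2 ≤ (A ∪ B).card := by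
    rw [hcard]
    have := Finset.card_pos.mpr hAne
    have := Finset.card_pos.mpr hBne
    omega
  rcases le_max_iff.mp (le_refl (max A.card B.card)) with hle | hle
  · -- A is the bigger side
    obtain ⟨b, hb⟩ := hBne
    have hbA : b ∉ A := fun h => Finset.disjoint_left.mp hdisj h hb
    have star := hasFS_snoc f b (by exact_mod_cast hbA) α
      (fun a ha => (hcross a (by exact_mod_cast ha) b hb).2) hFA
    have hsub : (insert b ↑A : Set V) ⊆ ↑(A ∪ B) := by
      intro x hx
      rcases hx with rfl | hx
      · exact_mod_cast Finset.mem_union_right _ hb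
      · exact_mod_cast Finset.mem_union_left _ (by exact_mod_cast hx)
    refine hasFS_mono f _ ?_ (hasFS_mono_set f hsub star)
    have h1 : Nat.clog 2 (A ∪ B).card ≤ Nat.clog 2 A.card + 1 := by
      rw [← clog_half hn2]
      have : ((A ∪ B).card + 1) / 2 ≤ A.card := le_trans hmax (by omega)
      exact Nat.add_le_add_right (Nat.clog_mono_right 2 this) 1
    omega
  · -- B is the bigger side
    obtain ⟨a, ha⟩ := hAne
    have haB : a ∉ B := fun h => Finset.disjoint_right.mp hdisj h ha
    have star := hasFS_snoc f a (by exact_mod_cast haB) α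
      (fun b hb => (hcross a ha b (by exact_mod_cast hb)).1) hFB
    have hsub : (insert a ↑B : Set V) ⊆ ↑(A ∪ B) := by
      intro x hx
      rcases hx with rfl | hx
      · exact_mod_cast Finset.mem_union_left _ ha
      · exact_mod_cast Finset.mem_union_right _ (by exact_mod_cast hx)
    refine hasFS_mono f _ ?_ (hasFS_mono_set f hsub star)
    have h1 : Nat.clog 2 (A ∪ B).card ≤ Nat.clog 2 B.card + 1 := by
      rw [← clog_half hn2]
      have : ((A ∪ B).card + 1) / 2 ≤ B.card := le_trans hmax (by omega)
      exact Nat.add_le_add_right (Nat.clog_mono_right 2 this) 1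
    omega


end EG
end
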